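/- With fⱼ^± and bₖ^± defined as above, the mixed relation {[fⱼ^ξ, bₖ^η], bₗ^ε} = (ε−η) δ_{kl} fⱼ^ξ holds for all j ∈ [1,n], k,l ∈ [1,n], and ξ,η,ε ∈ {+1,−1}, where {A,B} = AB + BA. -/
import Mathlib


open Matrix

/-- Index set `[-2n, 2n] ⊂ ℤ` for rows and columns. -/
abbrev Idx (n : ℕ) := {i : ℤ // i ∈ Finset.Icc (-(2 * (n : ℤ))) (2 * (n : ℤ))}

/-- Elementary matrix `e_{a,b}` with rows/columns indexed by `[-2n,2n]`. -/
def E (n : ℕ) (a b : ℤ) : Matrix (Idx n) (Idx n) ℂ :=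
  Matrix.of fun i j => if i.1 = a ∧ j.1 = b then 1 else 0

/-- Parafermion operators. -/
noncomputable def fOp (n : ℕ) (ξ j : ℤ) : Matrix (Idx n) (Idx n) ℂ :=
  if ξ = 1 then ((Real.sqrt 2 : ℝ) : ℂ) • (E n (-2 * j) 0 - E n 0 (-2 * j + 1))
  else ((Real.sqrt 2 : ℝ) : ℂ) • (E n 0 (-2 * j) - E n (-2 * j + 1) 0)

/-- Paraboson operators. -/
noncomputable def bOp (n : ℕ) (ξ i : ℤ) : Matrix (Idx n) (Idx n) ℂ :=
  if ξ = 1 then ((Real.sqrt 2 : ℝ) : ℂ) • (E n 0 (2 * i) + E n (2 * i - 1) 0)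
  else ((Real.sqrt 2 : ℝ) : ℂ) • (E n 0 (2 * i - 1) - E n (2 * i) 0)

lemma E_mul_ne (n : ℕ) (a b c d : ℤ) (h : b ≠ c) : E n a b * E n c d = 0 := by
  ext i m
  rw [Matrix.mul_apply]
  apply Finset.sum_eq_zero
  intro x _
  simp only [E, Matrix.of_apply]
  split_ifs with h1 h2
  · exact absurd (h1.2.symm.trans h2.1) h
  all_goals simp

lemma E_mul_same (n : ℕ) (a b c d : ℤ) (h : b = c) (h1 : -(2*(n:ℤ)) ≤ b)
    (h2 : b ≤ 2*(n:ℤ)) : E n a b * E n c d = E n a d := by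
  subst h
  ext i m
  rw [Matrix.mul_apply]
  have hb : b ∈ Finset.Icc (-(2*(n:ℤ))) (2*(n:ℤ)) := Finset.mem_Icc.mpr ⟨h1, h2⟩
  rw [Finset.sum_eq_single (⟨b, hb⟩ : Idx n)]
  · simp only [E, Matrix.of_apply]
    split_ifs <;> simp_all
  · intro x _ hx
    simp only [E, Matrix.of_apply]
    split_ifs with h1' h2' <;> simp_all [Subtype.ext_iff]
  · intro h; exact absurd (Finset.mem_univ _) h

lemma hs2 : ((Real.sqrt 2 : ℝ) : ℂ) * ((Real.sqrt 2 : ℝ) : ℂ) = 2 := by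
  rw [← Complex.ofReal_mul, Real.mul_self_sqrt (by norm_num)]
  norm_num

lemma hs3 : ((Real.sqrt 2 : ℝ) : ℂ)^3 = ((Real.sqrt 2 : ℝ) : ℂ) * 2 := by
  rw [pow_succ, pow_two, hs2]; ring

set_option maxHeartbeats 2000000 in
/-- the mixed relation `{[f_j^ξ, b_k^η], b_l^ε} = (ε−η) δ_{kl} f_j^ξ`. -/
theorem stmt8 (n : ℕ) (j k l ξ η ε : ℤ)
    (hj : 1 ≤ j ∧ j ≤ (n : ℤ)) (hk : 1 ≤ k ∧ k ≤ (n : ℤ)) (hl : 1 ≤ l ∧ l ≤ (n : ℤ))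
    (hξ : ξ = 1 ∨ ξ = -1) (hη : η = 1 ∨ η = -1) (hε : ε = 1 ∨ ε = -1) :
    (fOp n ξ j * bOp n η k - bOp n η k * fOp n ξ j) * bOp n ε l +
      bOp n ε l * (fOp n ξ j * bOp n η k - bOp n η k * fOp n ξ j) =
    ((ε - η : ℤ) : ℂ) • (if k = l then fOp n ξ j else 0) := by
  rcases hξ with rfl | rfl <;> rcases hη with rfl | rfl <;> rcases hε with rfl | rfl <;>
    rcases eq_or_ne k l with rfl | hne <;>
    simp (disch := omega) [fOp, bOp, E_mul_same, E_mul_ne, mul_sub, sub_mul, mul_add,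
      add_mul, smul_mul_assoc, mul_smul_comm, smul_smul, smul_sub, smul_add, hs2] <;>
    first
      | simp [hne]
      | (match_scalars <;> (try ring_nf) <;> (try simp [hs3, hs2]) <;> (try ring))
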